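/- Let A be a closed, densely defined linear operator on a complex Hilbert space H with 0 ∈ ρ(A), and suppose the family (P_n, A_n)_{n∈ℕ} approximates A strongly. For every 0 < ε < 1/‖A⁻¹‖ and every δ > ‖A⁻¹‖²ε/(1 − ‖A⁻¹‖ε) there exists n₀ ∈ ℕ such that σ_ε(A) ⊂ (B_δ(W(A_n⁻¹)))⁻¹ for all n ≥ n₀. -/

import Mathlib

open Filter Topology Metric

noncomputable section

variable {H : Type*} [NormedAddCommGroup H] [InnerProductSpace ℂ H] [CompleteSpace H]

/-- `R : H →L[ℂ] H` is a (two-sided, everywhere defined) bounded inverse of `A - lam`,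
i.e. `lam` belongs to the resolvent set of `A` with resolvent `R`. -/
def IsResolventAt (A : H →ₗ.[ℂ] H) (lam : ℂ) (R : H →L[ℂ] H) : Prop :=
  (∀ x : A.domain, R (A x - lam • (x : H)) = (x : H)) ∧
  ∀ y : H, ∃ hy : R y ∈ A.domain, A ⟨R y, hy⟩ - lam • R y = y

/-- The resolvent set `ρ(A)` of a (possibly unbounded) operator `A`. -/
def presolventSet (A : H →ₗ.[ℂ] H) : Set ℂ :=
  {lam | ∃ R, IsResolventAt A lam R}

-- The resolvent operator `(A - lam)⁻¹` (with junk value `0` off the resolvent set).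
open scoped Classical in
def resolventOf (A : H →ₗ.[ℂ] H) (lam : ℂ) : H →L[ℂ] H :=
  if h : ∃ R, IsResolventAt A lam R then h.choose else 0

/-- The `ε`-pseudospectrum `σ_ε(A) = {λ : ‖(A-λ)⁻¹‖ > 1/ε}`, where `‖(A-λ)⁻¹‖` is
understood as `∞` for `λ` in the spectrum. -/
def pseudoSpectrum (ε : ℝ) (A : H →ₗ.[ℂ] H) : Set ℂ :=
  {lam | lam ∉ presolventSet A ∨ 1 / ε < ‖resolventOf A lam‖}

/-- The numerical range `W(T) = {⟨T x, x⟩ : ‖x‖ = 1}` of a bounded operator `T`;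
`⟨T x, x⟩` (inner product linear in the first argument) is written as
`inner x (T x)` in the mathlib convention. -/
def numRange (T : H →L[ℂ] H) : Set ℂ :=
  {z | ∃ x : H, ‖x‖ = 1 ∧ z = (inner ℂ x (T x) : ℂ)}

/-- The numerical range of a (possibly unbounded) operator. -/
def pnumRange (A : H →ₗ.[ℂ] H) : Set ℂ :=
  {z | ∃ x : A.domain, ‖(x : H)‖ = 1 ∧ z = (inner ℂ (x : H) (A x) : ℂ)}

/-- The numerical radius of a bounded operator. -/
def nradius (T : H →L[ℂ] H) : ℝ :=
  sSup ((fun z : ℂ => ‖z‖) '' numRange T)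

/-- The numerical range of a bounded operator on a subspace `U` of `H`. -/
def numRangeSub {U : Submodule ℂ H} (T : U →L[ℂ] U) : Set ℂ :=
  {z | ∃ x : U, ‖(x : H)‖ = 1 ∧ z = (inner ℂ (x : H) ((T x : U) : H) : ℂ)}

/-- `B_δ(U) = {z : dist (z, U) < δ}`, the `δ`-neighborhood of a set `U ⊆ ℂ`. -/
def nbhdSet (δ : ℝ) (U : Set ℂ) : Set ℂ :=
  {z | ∃ u ∈ U, dist z u < δ}

/-- `U⁻¹ = {z⁻¹ : z ∈ U \ {0}}`. -/
def invSet (U : Set ℂ) : Set ℂ :=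
  {z | ∃ u ∈ U, u ≠ 0 ∧ z = u⁻¹}

/-- `U + s = {z + s : z ∈ U}`. -/
def shiftSet (U : Set ℂ) (s : ℂ) : Set ℂ :=
  {z | ∃ u ∈ U, z = u + s}

/-! For `λ ≠ 0` we have `A - λ = -λ A (A⁻¹ - λ⁻¹)`. If `d = dist(λ⁻¹, W(A⁻¹))` is positive, then
`|⟨(A⁻¹ - λ⁻¹) x, x⟩| ≥ d ‖x‖²`, so `A⁻¹ - λ⁻¹` is invertible with inverse of norm at most `1 / d`,
and `‖(A - λ)⁻¹‖ ≤ ‖A⁻¹‖ / (|λ| d)`. Together with `|λ⁻¹| ≤ d + ‖A⁻¹‖`, membership of `λ` in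
`σ_ε(A)` forces `d ≤ ‖A⁻¹‖² ε / (1 - ‖A⁻¹‖ ε)`. Finally `W(A_n⁻¹)` approximates `W(A⁻¹)`
uniformly: pointwise because `A_n⁻¹ P_n x → A⁻¹ x`, and uniformly because `W(A⁻¹)` is bounded,
hence totally bounded. -/

open scoped InnerProductSpace

theorem norm_le_infDist_add_of_subset_closedBall {E : Type*} [SeminormedAddCommGroup E]
    {s : Set E} {r : ℝ} (hs : s ⊆ closedBall 0 r) (hne : s.Nonempty) (z : E) :
    ‖z‖ ≤ infDist z s + r := by
  rw [← sub_le_iff_le_add, le_infDist hne]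
  intro w hw
  have hwr := mem_closedBall_zero_iff.1 (hs hw)
  rw [dist_eq_norm]
  linarith [norm_sub_norm_le z w]

theorem TotallyBounded.eventually_forall_exists_dist_lt {α ι : Type*} [PseudoMetricSpace α]
    {l : Filter ι} {s : Set α} (hs : TotallyBounded s) {t : ι → Set α}
    (h : ∀ x ∈ s, ∀ η > 0, ∀ᶠ i in l, ∃ y ∈ t i, dist x y < η) {η : ℝ} (hη : 0 < η) :
    ∀ᶠ i in l, ∀ x ∈ s, ∃ y ∈ t i, dist x y < η := by
  obtain ⟨F, hFs, hF, hcover⟩ := finite_approx_of_totallyBounded hs (η / 2) (half_pos hη)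
  filter_upwards [hF.eventually_all.2 fun c hc => h c (hFs hc) (η / 2) (half_pos hη)]
    with i hi x hx
  obtain ⟨c, hc, hxc⟩ := Set.mem_iUnion₂.1 (hcover hx)
  obtain ⟨y, hy, hcy⟩ := hi c hc
  exact ⟨y, hy, by linarith [dist_triangle x c y, mem_ball.1 hxc]⟩

section Coercive

variable {𝕜 E : Type*} [RCLike 𝕜] [NormedAddCommGroup E] [InnerProductSpace 𝕜 E]

theorem mul_sq_norm_le_norm_inner_of_forall_norm_eq_one {T : E →L[𝕜] E} {d : ℝ}
    (h : ∀ x, ‖x‖ = 1 → d ≤ ‖⟪x, T x⟫_𝕜‖) (x : E) : d * ‖x‖ ^ 2 ≤ ‖⟪x, T x⟫_𝕜‖ := by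
  rcases eq_or_ne x 0 with rfl | hx
  · simp
  have hu := h _ (norm_smul_inv_norm (𝕜 := 𝕜) hx)
  rw [map_smul, inner_smul_left, inner_smul_right, norm_mul, norm_mul, RCLike.norm_conj,
    norm_inv, RCLike.norm_ofReal, abs_norm] at hu
  have hx' : 0 < ‖x‖ := norm_pos_iff.mpr hx
  calc d * ‖x‖ ^ 2 ≤ ‖x‖⁻¹ * (‖x‖⁻¹ * ‖⟪x, T x⟫_𝕜‖) * ‖x‖ ^ 2 := by gcongr
    _ = ‖⟪x, T x⟫_𝕜‖ := by field_simp

theorem mul_norm_le_norm_apply_of_mul_sq_norm_le_norm_inner {T : E →L[𝕜] E} {d : ℝ}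
    (h : ∀ x, d * ‖x‖ ^ 2 ≤ ‖⟪x, T x⟫_𝕜‖) (x : E) : d * ‖x‖ ≤ ‖T x‖ := by
  rcases (norm_nonneg x).eq_or_lt with hx | hx
  · rw [← hx, mul_zero]
    exact norm_nonneg _
  refine le_of_mul_le_mul_left ?_ hx
  calc ‖x‖ * (d * ‖x‖) = d * ‖x‖ ^ 2 := by ring
    _ ≤ ‖x‖ * ‖T x‖ := (h x).trans (norm_inner_le_norm x (T x))

theorem exists_inverse_of_mul_sq_norm_le_norm_inner [CompleteSpace E] (T : E →L[𝕜] E) {d : ℝ}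
    (hd : 0 < d) (h : ∀ x, d * ‖x‖ ^ 2 ≤ ‖⟪x, T x⟫_𝕜‖) :
    ∃ S : E →L[𝕜] E, (∀ x, S (T x) = x) ∧ (∀ y, T (S y) = y) ∧ ‖S‖ ≤ d⁻¹ := by
  have hbelow := mul_norm_le_norm_apply_of_mul_sq_norm_le_norm_inner h
  have hanti : AntilipschitzWith ⟨d⁻¹, by positivity⟩ T := T.antilipschitz_of_bound fun x => by
    show ‖x‖ ≤ d⁻¹ * ‖T x‖
    rw [inv_mul_eq_div, le_div_iff₀' hd]
    exact hbelow x
  have : CompleteSpace (LinearMap.range (T : E →ₗ[𝕜] E)) := by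
    have hclosed : IsClosed (LinearMap.range (T : E →ₗ[𝕜] E) : Set E) := by
      rw [LinearMap.coe_range]
      exact hanti.isClosed_range T.uniformContinuous
    exact hclosed.completeSpace_coe
  have hsurj : LinearMap.range (T : E →ₗ[𝕜] E) = ⊤ := by
    rw [← Submodule.orthogonal_eq_bot_iff, Submodule.eq_bot_iff]
    intro y hy
    have hy0 : ⟪y, T y⟫_𝕜 = 0 :=
      Submodule.inner_left_of_mem_orthogonal (LinearMap.mem_range_self (T : E →ₗ[𝕜] E) y) hy
    have := h y
    rw [hy0, norm_zero] at this
    by_contra hy'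
    linarith [mul_pos hd (pow_pos (norm_pos_iff.2 hy') 2)]
  let e := ContinuousLinearEquiv.ofBijective T (LinearMap.ker_eq_bot_of_injective hanti.injective)
    hsurj
  refine ⟨e.symm, e.symm_apply_apply, e.apply_symm_apply, ?_⟩
  refine ContinuousLinearMap.opNorm_le_bound _ (by positivity) fun y => ?_
  have := hbelow (e.symm y)
  rw [show T (e.symm y) = y from e.apply_symm_apply y] at this
  rw [← div_eq_inv_mul, le_div_iff₀' hd]
  exact this

end Coercive

section NumericalRange

omit [CompleteSpace H]

theorem numRange_subset_closedBall (R : H →L[ℂ] H) : numRange R ⊆ closedBall 0 ‖R‖ := by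
  rintro _ ⟨x, hx, rfl⟩
  rw [mem_closedBall_zero_iff]
  calc ‖⟪x, R x⟫_ℂ‖ ≤ ‖x‖ * ‖R x‖ := norm_inner_le_norm _ _
    _ ≤ ‖x‖ * (‖R‖ * ‖x‖) := by gcongr; exact R.le_opNorm x
    _ = ‖R‖ := by rw [hx]; ring

theorem totallyBounded_numRange (R : H →L[ℂ] H) : TotallyBounded (numRange R) :=
  (isCompact_closedBall 0 ‖R‖).totallyBounded.subset (numRange_subset_closedBall R)

theorem numRange_nonempty_of_ne_zero {R : H →L[ℂ] H} (hR : R ≠ 0) : (numRange R).Nonempty := by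
  obtain ⟨y, hy⟩ : ∃ y, R y ≠ 0 := by
    by_contra! h
    exact hR (ContinuousLinearMap.ext h)
  have hy0 : y ≠ 0 := fun h => hy (h ▸ map_zero R)
  exact ⟨_, _, norm_smul_inv_norm (𝕜 := ℂ) hy0, rfl⟩

theorem inner_div_norm_sq_mem_numRangeSub {U : Submodule ℂ H} (T : U →L[ℂ] U) {x : U}
    (hx : (x : H) ≠ 0) : ⟪(x : H), (T x : H)⟫_ℂ / (‖(x : H)‖ ^ 2 : ℂ) ∈ numRangeSub T := by
  refine ⟨(‖(x : H)‖⁻¹ : ℂ) • x, norm_smul_inv_norm hx, ?_⟩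
  have hx' : (‖(x : H)‖ : ℂ) ≠ 0 := by exact_mod_cast norm_ne_zero_iff.2 hx
  simp only [map_smul, Submodule.coe_smul, inner_smul_left, inner_smul_right, map_inv₀,
    Complex.conj_ofReal]
  field_simp

theorem eventually_exists_mem_numRangeSub_dist_inner_lt {ι : Type*} {l : Filter ι}
    {U : ι → Submodule ℂ H} (T : ∀ i, U i →L[ℂ] U i) {p : ∀ i, U i} {y z : H} (hy : ‖y‖ = 1)
    (hp : Tendsto (fun i => (p i : H)) l (𝓝 y)) (hTp : Tendsto (fun i => (T i (p i) : H)) l (𝓝 z))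
    {η : ℝ} (hη : 0 < η) : ∀ᶠ i in l, ∃ w ∈ numRangeSub (T i), dist ⟪y, z⟫_ℂ w < η := by
  have hnorm : Tendsto (fun i => (‖(p i : H)‖ : ℂ) ^ 2) l (𝓝 1) := by
    simpa [hy] using (((Complex.continuous_ofReal.comp continuous_norm).tendsto y).comp hp).pow 2
  have hlim := (hp.inner hTp).div hnorm one_ne_zero
  rw [div_one] at hlim
  have hy0 : y ≠ 0 := norm_ne_zero_iff.1 (hy ▸ one_ne_zero)
  filter_upwards [Metric.tendsto_nhds.1 hlim η hη, hp.eventually_ne hy0] with i hi hpi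
  exact ⟨_, inner_div_norm_sq_mem_numRangeSub (T i) hpi, by rwa [dist_comm]⟩

end NumericalRange

section Resolvent

variable {A : H →ₗ.[ℂ] H} {R : H →L[ℂ] H} {lam : ℂ}

omit [CompleteSpace H] in
theorem IsResolventAt.unique {R' : H →L[ℂ] H} (hR : IsResolventAt A lam R)
    (hR' : IsResolventAt A lam R') : R = R' := by
  ext y
  obtain ⟨hy, hAy⟩ := hR'.2 y
  simpa [hAy] using hR.1 ⟨R' y, hy⟩

omit [CompleteSpace H] in
theorem resolventOf_eq (hR : IsResolventAt A lam R) : resolventOf A lam = R := by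
  have hex : ∃ R', IsResolventAt A lam R' := ⟨R, hR⟩
  rw [resolventOf, dif_pos hex]
  exact hex.choose_spec.unique hR

omit [CompleteSpace H] in
theorem isResolventAt_resolventOf (h : lam ∈ presolventSet A) :
    IsResolventAt A lam (resolventOf A lam) := by
  obtain ⟨R, hR⟩ := h
  rwa [resolventOf_eq hR]

omit [CompleteSpace H] in
theorem IsResolventAt.of_inverse_sub_inv {S : H →L[ℂ] H} (hR : IsResolventAt A 0 R)
    (hlam : lam ≠ 0) (hSl : ∀ x, S (R x - lam⁻¹ • x) = x)
    (hSr : ∀ y, R (S y) - lam⁻¹ • S y = y) : IsResolventAt A lam ((-lam⁻¹) • R ∘L S) := by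
  have hRA : ∀ x : A.domain, R (A x) = x := fun x => by simpa using hR.1 x
  have hAR : ∀ y, ∃ hy : R y ∈ A.domain, A ⟨R y, hy⟩ = y := fun y => by simpa using hR.2 y
  have hcomm : ∀ y, S (R y) = R (S y) := fun y =>
    calc S (R y) = S (R (R (S y)) - lam⁻¹ • R (S y)) := by rw [← map_smul, ← map_sub, hSr]
      _ = R (S y) := hSl _
  constructor
  · intro x
    have hRx : R (A x - lam • (x : H)) = (-lam) • (R x - lam⁻¹ • (x : H)) := by
      rw [map_sub, map_smul, hRA, smul_sub, smul_smul, neg_mul, mul_inv_cancel₀ hlam]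
      module
    simp only [smul_apply, ContinuousLinearMap.comp_apply]
    rw [← hcomm, hRx, map_smul, hSl, smul_smul, neg_mul_neg, inv_mul_cancel₀ hlam, one_smul]
  · intro y
    have hRS : ((-lam⁻¹) • R ∘L S) y = R ((-lam⁻¹) • S y) := by simp
    obtain ⟨hmem, hA⟩ := hAR ((-lam⁻¹) • S y)
    rw [hRS]
    refine ⟨hmem, ?_⟩
    rw [hA, map_smul, smul_smul, mul_neg, mul_inv_cancel₀ hlam]
    calc (-lam⁻¹) • S y - (-1 : ℂ) • R (S y) = R (S y) - lam⁻¹ • S y := by module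
      _ = y := hSr y

theorem mem_presolventSet_and_norm_resolventOf_le (hR : IsResolventAt A 0 R) (hlam : lam ≠ 0)
    (hd : 0 < infDist lam⁻¹ (numRange R)) :
    lam ∈ presolventSet A ∧
      ‖resolventOf A lam‖ ≤ ‖lam‖⁻¹ * ‖R‖ / infDist lam⁻¹ (numRange R) := by
  set d := infDist lam⁻¹ (numRange R)
  have hunit : ∀ x : H, ‖x‖ = 1 → d ≤ ‖⟪x, (R - lam⁻¹ • 1) x⟫_ℂ‖ := fun x hx =>
    calc d ≤ dist lam⁻¹ ⟪x, R x⟫_ℂ := infDist_le_dist_of_mem ⟨x, hx, rfl⟩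
      _ = ‖⟪x, (R - lam⁻¹ • 1) x⟫_ℂ‖ := by
        rw [dist_comm, dist_eq_norm]
        simp [inner_self_eq_norm_sq_to_K, hx]
  obtain ⟨S, hSl, hSr, hS⟩ := exists_inverse_of_mul_sq_norm_le_norm_inner _ hd
    (mul_sq_norm_le_norm_inner_of_forall_norm_eq_one hunit)
  have hres := hR.of_inverse_sub_inv hlam (S := S) (fun x => by simpa using hSl x)
    (fun y => by simpa using hSr y)
  refine ⟨⟨_, hres⟩, ?_⟩
  rw [resolventOf_eq hres]
  calc ‖(-lam⁻¹) • R ∘L S‖ ≤ ‖lam‖⁻¹ * (‖R‖ * ‖S‖) := by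
        rw [norm_smul, norm_neg, norm_inv]
        gcongr
        exact R.opNorm_comp_le S
    _ ≤ ‖lam‖⁻¹ * (‖R‖ * d⁻¹) := by gcongr
    _ = ‖lam‖⁻¹ * ‖R‖ / d := by ring

theorem infDist_inv_numRange_le_of_mem_pseudoSpectrum (hR : IsResolventAt A 0 R) {ε : ℝ}
    (hε : 0 < ε) (hεR : ‖R‖ * ε < 1) (hlam : lam ∈ pseudoSpectrum ε A) :
    lam ≠ 0 ∧ infDist lam⁻¹ (numRange R) ≤ ‖R‖ ^ 2 * ε / (1 - ‖R‖ * ε) := by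
  have hlam0 : lam ≠ 0 := by
    rintro rfl
    rcases hlam with h | h
    · exact h ⟨R, hR⟩
    · rw [resolventOf_eq hR, div_lt_iff₀ hε] at h
      linarith
  refine ⟨hlam0, ?_⟩
  set d := infDist lam⁻¹ (numRange R)
  rw [le_div_iff₀ (by linarith)]
  by_contra! hcd
  have hd : 0 < d := pos_of_mul_pos_left ((by positivity : 0 ≤ ‖R‖ ^ 2 * ε).trans_lt hcd)
    (by linarith)
  have hne : (numRange R).Nonempty :=
    Set.nonempty_iff_ne_empty.2 fun h => by simp [d, h] at hd
  obtain ⟨hmem, hnorm⟩ := mem_presolventSet_and_norm_resolventOf_le hR hlam0 hd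
  have hbig : 1 / ε < ‖lam‖⁻¹ * ‖R‖ / d := (hlam.resolve_left (not_not.2 hmem)).trans_le hnorm
  rw [div_lt_div_iff₀ hε hd, one_mul] at hbig
  have hinv : ‖lam‖⁻¹ ≤ d + ‖R‖ := by
    simpa using norm_le_infDist_add_of_subset_closedBall (numRange_subset_closedBall R) hne lam⁻¹
  nlinarith [mul_le_mul_of_nonneg_right hinv (by positivity : 0 ≤ ‖R‖ * ε)]

end Resolvent

theorem pseudospectrum_subset_inv_nbhd_numRange_approx_general
    (A : H →ₗ.[ℂ] H)
    (h0 : (0 : ℂ) ∈ presolventSet A)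
    (U : ℕ → Submodule ℂ H)
    (P : ℕ → H →L[ℂ] H)
    (hPmem : ∀ n x, P n x ∈ U n)
    (hPconv : ∀ x : H, Tendsto (fun n => P n x) atTop (𝓝 x))
    (Tinv : ∀ n, ↥(U n) →L[ℂ] ↥(U n))
    (happrox : ∀ x : H,
      Tendsto (fun n => (↑(Tinv n ⟨P n x, hPmem n x⟩) : H)) atTop
        (𝓝 (resolventOf A 0 x)))
    (ε : ℝ) (hε0 : 0 < ε) (hε : ε < 1 / ‖resolventOf A 0‖)
    (δ : ℝ)
    (hδ : ‖resolventOf A 0‖ ^ 2 * ε / (1 - ‖resolventOf A 0‖ * ε) < δ) :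
    ∃ n₀ : ℕ, ∀ n ≥ n₀,
      pseudoSpectrum ε A ⊆ invSet (nbhdSet δ (numRangeSub (Tinv n))) := by
  set R := resolventOf A 0
  have hR : IsResolventAt A 0 R := isResolventAt_resolventOf h0
  have hRpos : 0 < ‖R‖ := by
    by_contra! h
    rw [norm_le_zero_iff.1 h, norm_zero, div_zero] at hε
    linarith
  have hεR : ‖R‖ * ε < 1 := by rwa [lt_div_iff₀ hRpos, mul_comm] at hε
  obtain ⟨δ', hcδ', hδ'δ⟩ := exists_between hδ
  have happroxW : ∀ᶠ n in atTop, ∀ w ∈ numRange R,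
      ∃ w' ∈ numRangeSub (Tinv n), dist w w' < δ - δ' :=
    (totallyBounded_numRange R).eventually_forall_exists_dist_lt
      (fun _ ⟨y, hy, hw⟩ _ hη => hw ▸ eventually_exists_mem_numRangeSub_dist_inner_lt Tinv
        (p := fun n => ⟨P n y, hPmem n y⟩) hy (hPconv y) (happrox y) hη)
      (sub_pos.2 hδ'δ)
  obtain ⟨n₀, hn₀⟩ := eventually_atTop.1 happroxW
  refine ⟨n₀, fun n hn lam hlam => ?_⟩
  obtain ⟨hlam0, hdist⟩ := infDist_inv_numRange_le_of_mem_pseudoSpectrum hR hε0 hεR hlam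
  obtain ⟨w, hw, hlamw⟩ := (infDist_lt_iff (numRange_nonempty_of_ne_zero
    (norm_pos_iff.1 hRpos))).1 (hdist.trans_lt hcδ')
  obtain ⟨w', hw', hww'⟩ := hn₀ n hn w hw
  refine ⟨lam⁻¹, ⟨w', hw', ?_⟩, inv_ne_zero hlam0, (inv_inv lam).symm⟩
  linarith [dist_triangle lam⁻¹ w w']

/-- Proposition 3.5. -/
theorem pseudospectrum_subset_inv_nbhd_numRange_approx
    (A : H →ₗ.[ℂ] H)
    (hclosed : IsClosed (A.graph : Set (H × H)))
    (hdense : Dense (A.domain : Set H))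
    (h0 : (0 : ℂ) ∈ presolventSet A)
    (U : ℕ → Submodule ℂ H) (hUfin : ∀ n, FiniteDimensional ℂ (U n))
    (P : ℕ → H →L[ℂ] H)
    (hPmem : ∀ n x, P n x ∈ U n)
    (hPproj : ∀ n, ∀ x ∈ U n, P n x = x)
    (hPconv : ∀ x : H, Tendsto (fun n => P n x) atTop (𝓝 x))
    (T : ∀ n, ↥(U n) →L[ℂ] ↥(U n)) (Tinv : ∀ n, ↥(U n) →L[ℂ] ↥(U n))
    (hTinv : ∀ n, (∀ u, Tinv n (T n u) = u) ∧ ∀ u, T n (Tinv n u) = u)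
    (happrox : ∀ x : H,
      Tendsto (fun n => (↑(Tinv n ⟨P n x, hPmem n x⟩) : H)) atTop
        (𝓝 (resolventOf A 0 x)))
    (ε : ℝ) (hε0 : 0 < ε) (hε : ε < 1 / ‖resolventOf A 0‖)
    (δ : ℝ)
    (hδ : ‖resolventOf A 0‖ ^ 2 * ε / (1 - ‖resolventOf A 0‖ * ε) < δ) :
    ∃ n₀ : ℕ, ∀ n ≥ n₀,
      pseudoSpectrum ε A ⊆ invSet (nbhdSet δ (numRangeSub (Tinv n))) :=
  pseudospectrum_subset_inv_nbhd_numRange_approx_general A h0 U P hPmem hPconv Tinv happrox ε hε0 hε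
    δ hδ
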